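/- arXiv:1911.11278 — 2 statements merged into one kernel-verified Lean document; each statement's English description precedes it below -/
import Mathlib

section
/- Under the hypotheses of the previous proposition (with appropriate independence assumptions making X1 = S(Y1 XOR K) and X2 = S(Y2 XOR K) jointly well-defined), the mutual information I(X1; X2) is nonzero if and only if K = 0, given that S(Y1) XOR S(Y2) is non-uniform while for nonzero K the difference X1 XOR X2 is uniform and independent of X1. -/
/-- `BV m` models GF(2)^m: m-bit vectors, where `+` is bitwise XOR. -/
abbrev BV (m : ℕ) := Fin m → ZMod 2

/-- Shannon entropy (in bits) of a pmf on a finite type. -/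
noncomputable def H {α : Type*} [Fintype α] (p : α → ℝ) : ℝ :=
  -∑ a, p a * Real.logb 2 (p a)

/-- Mutual information I(X1;X2) = H(X1) + H(X2) - H(X1,X2) of a joint pmf. -/
noncomputable def MI {α β : Type*} [Fintype α] [Fintype β] (q : α × β → ℝ) : ℝ :=
  H (fun a => ∑ b, q (a, b)) + H (fun b => ∑ a, q (a, b)) - H q

/-!
Since `X1` is uniform and independent of `D = X1 + X2`, both marginals are uniform and
`H(X1, X2) = H(X1) + H(D)`, so `I(X1; X2) = m - H(D)`. By the strict concavity of
`x ↦ -x log x` (Jensen), `H(D) ≤ m` with equality exactly when `D` is uniform.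
-/

open Real

lemma H_eq_sum_negMulLog {α : Type*} [Fintype α] (p : α → ℝ) :
    H p = (∑ a, negMulLog (p a)) / log 2 := by
  simp only [H, negMulLog, logb, Finset.sum_div, ← Finset.sum_neg_distrib]
  exact Finset.sum_congr rfl fun a _ => by ring

lemma sum_negMulLog_card_inv (α : Type*) [Fintype α] [Nonempty α] :
    ∑ _a : α, negMulLog (Fintype.card α : ℝ)⁻¹ = log (Fintype.card α) := by
  have hcard : (Fintype.card α : ℝ) ≠ 0 := Nat.cast_ne_zero.mpr Fintype.card_ne_zero
  rw [Finset.sum_const, Finset.card_univ, nsmul_eq_mul, negMulLog, log_inv]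
  field_simp

lemma H_uniform (α : Type*) [Fintype α] [Nonempty α] :
    H (fun _ : α => (Fintype.card α : ℝ)⁻¹) = logb 2 (Fintype.card α) := by
  rw [H_eq_sum_negMulLog, sum_negMulLog_card_inv, logb]

lemma H_lt_logb_card {α : Type*} [Fintype α] [Nonempty α] {p : α → ℝ} (h0 : ∀ a, 0 ≤ p a)
    (h1 : ∑ a, p a = 1) (hp : ¬ ∀ a, p a = (Fintype.card α : ℝ)⁻¹) :
    H p < logb 2 (Fintype.card α) := by
  set n : ℝ := (Fintype.card α : ℝ) with hn_def
  have hn : 0 < n := Nat.cast_pos.mpr Fintype.card_pos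
  have hnonconst : ∃ j ∈ Finset.univ, ∃ k ∈ Finset.univ, p j ≠ p k := by
    by_contra! hconst
    obtain ⟨a⟩ := ‹Nonempty α›
    refine hp fun b => ?_
    have hsum : n * p a = 1 := by
      rw [← h1, Finset.sum_congr rfl fun b _ => hconst b (by simp) a (by simp)]
      simp [n]
    rw [hconst b (by simp) a (by simp)]
    exact eq_inv_of_mul_eq_one_left (by rw [mul_comm, hsum])
  have jensen := strictConcaveOn_negMulLog.lt_map_sum (t := Finset.univ) (w := fun _ => n⁻¹)
    (fun _ _ => inv_pos.mpr hn) (by simp [n, hn.ne']) (fun a _ => h0 a) hnonconst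
  simp only [smul_eq_mul, ← Finset.mul_sum, h1, mul_one] at jensen
  have hsum_lt : ∑ a, negMulLog (p a) < log n := by
    have hlog := sum_negMulLog_card_inv α
    rw [← hn_def, Finset.sum_const, Finset.card_univ, nsmul_eq_mul] at hlog
    calc ∑ a, negMulLog (p a) = n * (n⁻¹ * ∑ a, negMulLog (p a)) := by field_simp
      _ < n * negMulLog n⁻¹ := mul_lt_mul_of_pos_left jensen hn
      _ = log n := hlog
  rw [H_eq_sum_negMulLog, logb]
  exact div_lt_div_of_pos_right hsum_lt (log_pos one_lt_two)

section AddIndep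

variable {G : Type*} [AddGroup G] [Fintype G]

lemma sum_add_left_eq {M : Type*} [AddCommMonoid M] (f : G → M) (a : G) :
    ∑ b, f (a + b) = ∑ d, f d :=
  Equiv.sum_comp (Equiv.addLeft a) f

lemma sum_add_right_eq {M : Type*} [AddCommMonoid M] (f : G → M) (b : G) :
    ∑ a, f (a + b) = ∑ d, f d :=
  Equiv.sum_comp (Equiv.addRight b) f

lemma MI_uniform_mul_add (p : G → ℝ) (h1 : ∑ d, p d = 1) :
    MI (fun z : G × G => (Fintype.card G : ℝ)⁻¹ * p (z.1 + z.2)) =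
      logb 2 (Fintype.card G) - H p := by
  set c : ℝ := (Fintype.card G : ℝ)⁻¹
  have hleft : (fun a => ∑ b, c * p (a + b)) = fun _ => c := by
    ext a; rw [← Finset.mul_sum, sum_add_left_eq p a, h1, mul_one]
  have hright : (fun b => ∑ a, c * p (a + b)) = fun _ => c := by
    ext b; rw [← Finset.mul_sum, sum_add_right_eq p b, h1, mul_one]
  have hjoint : ∑ z : G × G, negMulLog (c * p (z.1 + z.2)) =
      log (Fintype.card G) + ∑ d, negMulLog (p d) := by
    have hc : (Fintype.card G : ℝ) * c = 1 :=
      mul_inv_cancel₀ (Nat.cast_ne_zero.mpr Fintype.card_ne_zero)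
    rw [Fintype.sum_prod_type, Finset.sum_congr rfl fun a _ =>
      sum_add_left_eq (fun d => negMulLog (c * p d)) a]
    simp only [Finset.sum_const, Finset.card_univ, nsmul_eq_mul, negMulLog_mul,
      Finset.sum_add_distrib, ← Finset.sum_mul, ← Finset.mul_sum, h1, one_mul, mul_add,
      ← mul_assoc, hc]
    rw [← sum_negMulLog_card_inv G, Finset.sum_const, Finset.card_univ, nsmul_eq_mul]
  rw [MI, hleft, hright, H_uniform, H_eq_sum_negMulLog, hjoint, H_eq_sum_negMulLog, logb]
  ring

end AddIndep

lemma card_BV (m : ℕ) : (Fintype.card (BV m) : ℝ) = 2 ^ m := by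
  simp [BV]

/-- For each key K let (X1, X2) = (S(Y1 ⊕ K), S(Y2 ⊕ K)) have
joint pmf `q K`, with X1 uniform and the difference D = X1 ⊕ X2 (pmf `pΔ K`)
independent of X1, i.e. `q K (x1, x2) = 2^{-m} * pΔ K (x1 + x2)`.  If the
difference is non-uniform for K = 0 and uniform for every K ≠ 0, then the
mutual information I(X1; X2) is nonzero if and only if K = 0. -/
theorem stmt_13 (m : ℕ) (q : BV m → BV m × BV m → ℝ) (pΔ : BV m → BV m → ℝ)
    (hΔ0 : ∀ K d, 0 ≤ pΔ K d) (hΔ1 : ∀ K, ∑ d, pΔ K d = 1)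
    (hjoint : ∀ K x1 x2, q K (x1, x2) = ((2 : ℝ) ^ m)⁻¹ * pΔ K (x1 + x2))
    (hbias0 : ¬ ∀ d, pΔ 0 d = ((2 : ℝ) ^ m)⁻¹)
    (hunif : ∀ K : BV m, K ≠ 0 → ∀ d, pΔ K d = ((2 : ℝ) ^ m)⁻¹) :
    ∀ K : BV m, MI (q K) ≠ 0 ↔ K = 0 := by
  intro K
  have hq : q K = fun z => (Fintype.card (BV m) : ℝ)⁻¹ * pΔ K (z.1 + z.2) :=
    funext fun z => by rw [card_BV]; exact hjoint K z.1 z.2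
  rw [hq, MI_uniform_mul_add _ (hΔ1 K), sub_ne_zero]
  constructor
  · intro hMI
    by_contra hK
    have huniform : pΔ K = fun _ => (Fintype.card (BV m) : ℝ)⁻¹ := by
      rw [card_BV]; exact funext (hunif K hK)
    exact hMI (by rw [huniform, H_uniform])
  · rintro rfl
    exact (H_lt_logb_card (hΔ0 0) (hΔ1 0) (by rwa [card_BV])).ne'
end

section
/- In the Canright decomposition, for a nonzero X = (x_1, x_0) in GF(2^8) over GF(2^4), the quantity y^{-1} satisfies y^{-1} = nu * (x_0 + x_1)^2 + x_0 * x_1 in GF(2^4), where nu is the fixed norm/scaling constant of the extension; consequently y^{-1} is a polynomial function of the input coordinates and is nonzero iff X != 0. -/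
/-!
Since `t^q = t + 1` is the conjugate of `t`, swapping the two normal-basis coordinates is the
Galois conjugation `X ↦ X^q`. Hence `X · X^q = ν (x0 + x1)² + x0 x1` is the norm of `X`, an
element of `GF(2^4)`, and `X⁻¹ = N(X)⁻¹ · X^q` forces `y = N(X)⁻¹`. The norm of `X` vanishes only
for `X = 0`, because the extension is a field and `1, t` are linearly independent over `GF(2^4)`.
-/

open Polynomial

theorem AdjoinRoot.of_mul_root_add_of_eq_zero_iff {K : Type*} [Field K] {p : K[X]}
    (hp : 1 < p.degree) {c d : K} :
    of p c * root p + of p d = 0 ↔ c = 0 ∧ d = 0 := by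
  refine ⟨fun h => ?_, by rintro ⟨rfl, rfl⟩; simp⟩
  have hlin : C c * X + C d = 0 := by
    refine eq_zero_of_dvd_of_degree_lt (mk_eq_zero.mp ?_) (degree_linear_le.trans_lt hp)
    simpa [mk_X, mk_C] using h
  exact ⟨by simpa using congrArg (coeff · 1) hlin, by simpa using congrArg (coeff · 0) hlin⟩

theorem mul_mul_swap_eq_of_sq_add_self_add_eq_zero {R : Type*} [CommRing R] [CharP R 2]
    {θ ν : R} (hθ : θ ^ 2 + θ + ν = 0) (a b : R) :
    ((a + b) * θ + b) * ((a + b) * θ + a) = ν * (a + b) ^ 2 + a * b := by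
  linear_combination (a + b) ^ 2 * hθ - ν * (a + b) ^ 2 * CharTwo.two_eq_zero (R := R)

namespace Canright

variable {K : Type*} [Field K] (ν : K)

theorem degree_quadratic : (X ^ 2 + X + C ν).degree = 2 := by
  compute_degree!

/-- `x1 • t^q + x0 • t`, where `t^q = t + 1` is the other root of `t² + t + ν` in
characteristic `2`. -/
noncomputable def normalElem (x1 x0 : K) : AdjoinRoot (X ^ 2 + X + C ν) :=
  AdjoinRoot.of _ (x0 + x1) * AdjoinRoot.root _ + AdjoinRoot.of _ x1

variable {ν}

theorem normalElem_eq_zero_iff {x1 x0 : K} : normalElem ν x1 x0 = 0 ↔ x1 = 0 ∧ x0 = 0 := by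
  rw [normalElem, AdjoinRoot.of_mul_root_add_of_eq_zero_iff
    (by rw [degree_quadratic]; exact Nat.one_lt_ofNat)]
  constructor
  · rintro ⟨hsum, rfl⟩
    exact ⟨rfl, by simpa using hsum⟩
  · rintro ⟨rfl, rfl⟩
    simp

theorem normalElem_mul_left (y x1 x0 : K) :
    normalElem ν (y * x1) (y * x0) = AdjoinRoot.of _ y * normalElem ν x1 x0 := by
  simp only [normalElem, map_add, map_mul]
  ring

theorem normalElem_mul_swap [CharP K 2] (x1 x0 : K) :
    normalElem ν x1 x0 * normalElem ν x0 x1 =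
      AdjoinRoot.of _ (ν * (x0 + x1) ^ 2 + x0 * x1) := by
  have := charP_of_injective_algebraMap
    (AdjoinRoot.of.injective_of_degree_ne_zero (f := X ^ 2 + X + C ν)
      (by rw [degree_quadratic]; exact two_ne_zero)) 2
  have hroot := AdjoinRoot.eval₂_root (X ^ 2 + X + C ν)
  rw [eval₂_add, eval₂_add, eval₂_pow, eval₂_X, eval₂_C] at hroot
  simp only [normalElem, map_add, map_mul, map_pow, add_comm x1 x0]
  exact mul_mul_swap_eq_of_sq_add_self_add_eq_zero hroot _ _

variable [CharP K 2] [Fact (Irreducible (X ^ 2 + X + C ν))]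

theorem norm_ne_zero_iff (a b : K) : ν * (a + b) ^ 2 + a * b ≠ 0 ↔ (a, b) ≠ (0, 0) := by
  rw [Ne, ← map_eq_zero_iff _ (AdjoinRoot.of (X ^ 2 + X + C ν)).injective,
    ← normalElem_mul_swap, mul_eq_zero, normalElem_eq_zero_iff, normalElem_eq_zero_iff]
  simp [and_comm]

theorem inv_eq_norm_of_inv_normalElem {x1 x0 y : K} (hX : (x1, x0) ≠ (0, 0))
    (hy : (normalElem ν x1 x0)⁻¹ = normalElem ν (x0 * y) (x1 * y)) :
    y⁻¹ = ν * (x0 + x1) ^ 2 + x0 * x1 := by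
  have hne : normalElem ν x1 x0 ≠ 0 := by simpa [normalElem_eq_zero_iff] using hX
  refine inv_eq_of_mul_eq_one_right ((AdjoinRoot.of (X ^ 2 + X + C ν)).injective ?_)
  rw [map_mul, map_one, ← normalElem_mul_swap, ← mul_inv_cancel₀ hne, hy,
    mul_comm x0, mul_comm x1, normalElem_mul_left]
  ring

end Canright

/-- Canright tower-field decomposition.  GF(2^8) is built from
GF(2^4) (a field F with 16 elements) as E = F[t]/(t² + t + ν).  In the normal
basis {t, t^q} (with t^q = t + 1), a pair (x1, x0) represents the element
x1·t^q + x0·t = (x0 + x1)·t + x1 of E.  If X = (x1, x0) is nonzero and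
y ∈ F is the intermediate value satisfying X⁻¹ = (x0·y, x1·y), then
y⁻¹ = ν·(x0 + x1)² + x0·x1; consequently this norm expression, as a polynomial
function of the coordinates, is nonzero iff the represented element is
nonzero. -/
theorem stmt_18 (F : Type*) [Field F] [Fintype F] (hF : Fintype.card F = 16)
    (ν : F) (hirr : Fact (Irreducible (X ^ 2 + X + C ν)))
    (x1 x0 : F) (hX : (x1, x0) ≠ (0, 0)) (y : F)
    (hy : (AdjoinRoot.of (X ^ 2 + X + C ν) (x0 + x1) *
            AdjoinRoot.root (X ^ 2 + X + C ν) +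
          AdjoinRoot.of (X ^ 2 + X + C ν) x1)⁻¹
        = AdjoinRoot.of (X ^ 2 + X + C ν) (x1 * y + x0 * y) *
            AdjoinRoot.root (X ^ 2 + X + C ν) +
          AdjoinRoot.of (X ^ 2 + X + C ν) (x0 * y)) :
    y⁻¹ = ν * (x0 + x1) ^ 2 + x0 * x1 ∧
    (∀ a b : F, ν * (a + b) ^ 2 + a * b ≠ 0 ↔ (a, b) ≠ (0, 0)) := by
  have : CharP F 2 := charP_of_card_eq_prime_pow (f := 4) hF
  exact ⟨Canright.inv_eq_norm_of_inv_normalElem hX hy, Canright.norm_ne_zero_iff⟩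
end
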